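/- For every directed co-graph G, the directed path-width of G equals the directed tree-width of G. -/

import Mathlib

noncomputable section
attribute [local instance] Classical.propDecidable

/-- A digraph: a loopless binary relation on a vertex type. -/
structure Digraph' (V : Type) where
  Adj : V → V → Prop
  loopless : ∀ v, ¬ Adj v v

namespace Digraph'

/-- The subdigraph of `G` induced by a vertex set `S`. -/
def induce {V : Type} (G : Digraph' V) (S : Set V) : Digraph' S where
  Adj a b := G.Adj a.1 b.1
  loopless a := G.loopless a.1

end Digraph'

/-- `bags : Fin r → Set V` is a directed path-decomposition of `G`:
(dpw-1) the bags cover `V`; (dpw-2) for every arc `(u,v)` there are `i ≤ j` with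
`u ∈ X_i`, `v ∈ X_j`; (dpw-3) every vertex occurs in a consecutive interval of bags. -/
def IsDPD {V : Type} (G : Digraph' V) (r : ℕ) (bags : Fin r → Set V) : Prop :=
  (∀ v, ∃ i, v ∈ bags i) ∧
  (∀ u v, G.Adj u v → ∃ i j : Fin r, i ≤ j ∧ u ∈ bags i ∧ v ∈ bags j) ∧
  (∀ (v : V) (i j k : Fin r), i ≤ j → j ≤ k → v ∈ bags i → v ∈ bags k → v ∈ bags j)

/-- The width of a sequence of bags: maximum bag size minus one. -/
def bagsWidth {V : Type} {r : ℕ} (bags : Fin r → Set V) : ℕ :=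
  (Finset.univ.sup fun i => (bags i).ncard) - 1

/-- The directed path-width of a digraph. -/
def dpw {V : Type} [Fintype V] (G : Digraph' V) : ℕ :=
  sInf { w | ∃ (r : ℕ) (bags : Fin r → Set V), IsDPD G r bags ∧ bagsWidth bags = w }

/-- Disjoint union `G ⊕ H` of two vertex-disjoint digraphs. -/
def dDisjUnion {V W : Type} (G : Digraph' V) (H : Digraph' W) : Digraph' (V ⊕ W) where
  Adj x y :=
    match x, y with
    | Sum.inl a, Sum.inl b => G.Adj a b
    | Sum.inr a, Sum.inr b => H.Adj a b
    | _, _ => False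
  loopless v := by
    cases v with
    | inl a => exact G.loopless a
    | inr a => exact H.loopless a

/-- Order composition `G ⊘ H`: disjoint union plus all arcs from `G` to `H`. -/
def dOrder {V W : Type} (G : Digraph' V) (H : Digraph' W) : Digraph' (V ⊕ W) where
  Adj x y :=
    match x, y with
    | Sum.inl a, Sum.inl b => G.Adj a b
    | Sum.inr a, Sum.inr b => H.Adj a b
    | Sum.inl _, Sum.inr _ => True
    | Sum.inr _, Sum.inl _ => False
  loopless v := by
    cases v with
    | inl a => exact G.loopless a
    | inr a => exact H.loopless a

/-- Series composition `G ⊗ H`: disjoint union plus all arcs in both directions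
between `G` and `H`. -/
def dSeries {V W : Type} (G : Digraph' V) (H : Digraph' W) : Digraph' (V ⊕ W) where
  Adj x y :=
    match x, y with
    | Sum.inl a, Sum.inl b => G.Adj a b
    | Sum.inr a, Sum.inr b => H.Adj a b
    | Sum.inl _, Sum.inr _ => True
    | Sum.inr _, Sum.inl _ => True
  loopless v := by
    cases v with
    | inl a => exact G.loopless a
    | inr a => exact H.loopless a

/-- A directed union `G ⊖ H`: disjoint union plus an arbitrary set `F` of arcs
directed from vertices of `G` to vertices of `H`. -/
def dDirUnion {V W : Type} (G : Digraph' V) (H : Digraph' W) (F : V → W → Prop) :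
    Digraph' (V ⊕ W) where
  Adj x y :=
    match x, y with
    | Sum.inl a, Sum.inl b => G.Adj a b
    | Sum.inr a, Sum.inr b => H.Adj a b
    | Sum.inl a, Sum.inr b => F a b
    | Sum.inr _, Sum.inl _ => False
  loopless v := by
    cases v with
    | inl a => exact G.loopless a
    | inr a => exact H.loopless a

/-- The underlying undirected graph of a digraph. -/
def und {V : Type} (G : Digraph' V) : SimpleGraph V where
  Adj u v := G.Adj u v ∨ G.Adj v u
  symm := ⟨fun u v h => h.symm⟩
  loopless := ⟨fun v h => h.elim (G.loopless v) (G.loopless v)⟩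

/-- `bags` is an (undirected) path-decomposition of the simple graph `G`. -/
def IsUPD {V : Type} (G : SimpleGraph V) (r : ℕ) (bags : Fin r → Set V) : Prop :=
  (∀ v, ∃ i, v ∈ bags i) ∧
  (∀ u v, G.Adj u v → ∃ i : Fin r, u ∈ bags i ∧ v ∈ bags i) ∧
  (∀ (v : V) (i j k : Fin r), i ≤ j → j ≤ k → v ∈ bags i → v ∈ bags k → v ∈ bags j)

/-- The (undirected) path-width of a simple graph. -/
def upw {V : Type} [Fintype V] (G : SimpleGraph V) : ℕ :=
  sInf { w | ∃ (r : ℕ) (bags : Fin r → Set V), IsUPD G r bags ∧ bagsWidth bags = w }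

/-- `S` is `Z`-normal in `G`: every directed walk in `G - Z` with first and last
vertex in `S` uses only vertices of `S` (equivalently of `Z ∪ S`). -/
def ZNormal {V : Type} (G : Digraph' V) (Z S : Set V) : Prop :=
  ∀ (l : List V) (hl : l ≠ []), l.Chain' G.Adj → (∀ v ∈ l, v ∉ Z) →
    l.head hl ∈ S → l.getLast hl ∈ S → ∀ v ∈ l, v ∈ S

/-- A directed (arboreal) tree-decomposition of `G`.
The out-tree has vertex set `Fin t`, root `root`, and parent function `par`
(with `par root = root`); its arcs are the pairs `(par s, s)` for `s ≠ root`.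
`W` partitions `V` into nonempty sets, `X s` is the set attached to the arc
`(par s, s)`, and for each arc the union of the `W r` over all descendants `r`
of `s` is `X s`-normal. -/
structure DTD {V : Type} (G : Digraph' V) where
  t : ℕ
  root : Fin t
  par : Fin t → Fin t
  par_root : par root = root
  reach : ∀ s : Fin t, ∃ n : ℕ, par^[n] s = root
  W : Fin t → Set V
  X : Fin t → Set V
  W_nonempty : ∀ s, (W s).Nonempty
  W_disjoint : ∀ s s', s ≠ s' → Disjoint (W s) (W s')
  W_cover : ∀ v : V, ∃ s, v ∈ W s
  normal : ∀ s : Fin t, s ≠ root →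
    ZNormal G (X s) (⋃ r ∈ {r : Fin t | ∃ n : ℕ, par^[n] r = s}, W r)

namespace DTD

variable {V : Type} {G : Digraph' V}

/-- The set `W_s ∪ ⋃_{e ∼ s} X_e` at a tree vertex `s`. -/
def bagAt (D : DTD G) (s : Fin D.t) : Set V :=
  D.W s ∪ ⋃ s' ∈ {s' : Fin D.t | s' ≠ D.root ∧ (s' = s ∨ D.par s' = s)}, D.X s'

/-- The width of a directed tree-decomposition. -/
def width (D : DTD G) : ℕ :=
  (Finset.univ.sup fun s => (D.bagAt s).ncard) - 1

end DTD

/-- The directed tree-width of a digraph. -/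
def dtw {V : Type} [Fintype V] (G : Digraph' V) : ℕ :=
  sInf { w | ∃ D : DTD G, D.width = w }

/-- Reachability in a digraph. -/
def Reach {V : Type} (G : Digraph' V) : V → V → Prop :=
  Relation.ReflTransGen G.Adj

/-- The strongly connected component of a vertex `v`. -/
def sccOf {V : Type} (G : Digraph' V) (v : V) : Set V :=
  {u | Reach G v u ∧ Reach G u v}

/-- `S` is a strongly connected component of `G`. -/
def IsSCC {V : Type} (G : Digraph' V) (S : Set V) : Prop :=
  ∃ v, S = sccOf G v

/-- Directed co-graphs: built from single-vertex digraphs by disjoint union,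
series composition and order composition. -/
inductive DiCograph : {V : Type} → Digraph' V → Prop
  | single {V : Type} (G : Digraph' V) (h1 : Nonempty V) (h2 : Subsingleton V) :
      DiCograph G
  | disjUnion {V W : Type} {G : Digraph' V} {H : Digraph' W} :
      DiCograph G → DiCograph H → DiCograph (dDisjUnion G H)
  | series {V W : Type} {G : Digraph' V} {H : Digraph' W} :
      DiCograph G → DiCograph H → DiCograph (dSeries G H)
  | order {V W : Type} {G : Digraph' V} {H : Digraph' W} :
      DiCograph G → DiCograph H → DiCograph (dOrder G H)

/-
Every digraph satisfies `dtw G ≤ dpw G`: list the vertices by the first bag of an optimal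
directed path-decomposition containing them; cutting this list after each position gives a
directed tree-decomposition along a path, each of whose bags lies inside a bag of the
path-decomposition.

Conversely, a haven `β` of order `k` forces a bag of size at least `k` in every directed
tree-decomposition. Otherwise `β` of the bag at the root lies in the subtree below the root, and
whenever `β` of the bag at `s` lies below `s`, it misses the part `W s` and so meets the subtree
below a child `c`; since `X c` lies in both bags, `β (X c)` contains `β` of both bags, and by
normality it lies below `c`. So we descend forever. A directed co-graph `G` has a haven of order
`dpw G + 1`, built along its co-graph expression: disjoint union and order composition do not
raise `dpw` above that of the larger piece, whose haven is inherited, and for series compositions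
`dpw (G ⊗ H) ≤ min (dpw G + |H|) (dpw H + |G|)`, which a haven of that order matches.
-/

lemma Finset.univ_sup_sub_one_le_iff {ι : Type} [Fintype ι] (f : ι → ℕ) (w : ℕ) :
    Finset.univ.sup f - 1 ≤ w ↔ ∀ i, f i ≤ w + 1 := by
  simp [Finset.sup_le_iff]

lemma Set.ncard_eq_ncard_preimage_inl_add_ncard_preimage_inr {V W : Type} [Finite V] [Finite W]
    (Z : Set (V ⊕ W)) : Z.ncard = (Sum.inl ⁻¹' Z).ncard + (Sum.inr ⁻¹' Z).ncard := by
  conv_lhs => rw [← Set.image_preimage_inl_union_image_preimage_inr Z]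
  rw [Set.ncard_union_eq, Set.ncard_image_of_injective _ Sum.inl_injective,
    Set.ncard_image_of_injective _ Sum.inr_injective]
  exact Set.disjoint_of_subset (Set.image_subset_range _ _) (Set.image_subset_range _ _)
    Set.isCompl_range_inl_range_inr.disjoint

lemma List.exists_isChain_through {α : Type} {r : α → α → Prop} {a b c : α}
    (hab : Relation.ReflTransGen r a b) (hbc : Relation.ReflTransGen r b c) :
    ∃ (l : List α) (hl : l ≠ []),
      l.IsChain r ∧ l.head hl = a ∧ l.getLast hl = c ∧ b ∈ l := by
  obtain ⟨l₁, h₁, e₁⟩ := List.exists_isChain_cons_of_relationReflTransGen hab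
  obtain ⟨l₂, h₂, e₂⟩ := List.exists_isChain_cons_of_relationReflTransGen hbc
  refine ⟨(a :: l₁) ++ l₂, by simp, h₁.append h₂.tail ?_, rfl, ?_, ?_⟩
  · intro x hx
    rw [List.getLast?_eq_some_getLast (List.cons_ne_nil a l₁), e₁, Option.mem_some_iff] at hx
    exact hx ▸ h₂.rel_head?
  · cases l₂ with
    | nil => simpa [e₁] using e₂
    | cons x l₂ => rwa [List.getLast_append_of_ne_nil _ (List.cons_ne_nil x l₂)]
  · exact List.mem_append_left _ (e₁ ▸ List.getLast_mem _)

lemma Fintype.exists_equiv_fin_monotone_comp {V α : Type} [Fintype V] [LinearOrder α]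
    (f : V → α) : ∃ e : Fin (Fintype.card V) ≃ V, Monotone (f ∘ e) :=
  ⟨(Tuple.sort (f ∘ (Fintype.equivFin V).symm)).trans (Fintype.equivFin V).symm,
    Tuple.monotone_sort (f ∘ (Fintype.equivFin V).symm)⟩

section PathWidth

variable {V W : Type}

lemma bagsWidth_le_iff {r : ℕ} (bags : Fin r → Set V) (w : ℕ) :
    bagsWidth bags ≤ w ↔ ∀ i, (bags i).ncard ≤ w + 1 :=
  Finset.univ_sup_sub_one_le_iff _ w

lemma ncard_le_bagsWidth_add_one {r : ℕ} (bags : Fin r → Set V) (i : Fin r) :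
    (bags i).ncard ≤ bagsWidth bags + 1 :=
  (bagsWidth_le_iff bags _).1 le_rfl i

lemma isDPD_const_univ (G : Digraph' V) : IsDPD G 1 fun _ => Set.univ :=
  ⟨fun _ => ⟨0, trivial⟩, fun _ _ _ => ⟨0, 0, le_rfl, trivial, trivial⟩,
    fun _ _ _ _ _ _ _ _ => trivial⟩

lemma IsDPD.append {K : Digraph' (V ⊕ W)} {G : Digraph' V} {H : Digraph' W}
    (hG : ∀ a b, K.Adj (.inl a) (.inl b) → G.Adj a b)
    (hH : ∀ a b, K.Adj (.inr a) (.inr b) → H.Adj a b)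
    (hback : ∀ a b, ¬ K.Adj (.inr b) (.inl a))
    {rG rH : ℕ} {XG : Fin rG → Set V} {XH : Fin rH → Set W}
    (hXG : IsDPD G rG XG) (hXH : IsDPD H rH XH) :
    IsDPD K (rG + rH) (Fin.append (fun i => .inl '' XG i) (fun j => .inr '' XH j)) := by
  refine ⟨?_, ?_, ?_⟩
  · rintro (a | b)
    · obtain ⟨i, hi⟩ := hXG.1 a
      exact ⟨Fin.castAdd rH i, by simpa using hi⟩
    · obtain ⟨j, hj⟩ := hXH.1 b
      exact ⟨Fin.natAdd rG j, by simpa using hj⟩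
  · rintro (a | b) (a' | b') hadj
    · obtain ⟨i, j, hij, hi, hj⟩ := hXG.2.1 a a' (hG a a' hadj)
      exact ⟨Fin.castAdd rH i, Fin.castAdd rH j, Fin.le_def.2 (by simpa using Fin.le_def.1 hij),
        by simpa using hi, by simpa using hj⟩
    · obtain ⟨i, hi⟩ := hXG.1 a
      obtain ⟨j, hj⟩ := hXH.1 b'
      exact ⟨Fin.castAdd rH i, Fin.natAdd rG j, by simp [Fin.le_def]; omega,
        by simpa using hi, by simpa using hj⟩
    · exact absurd hadj (hback _ _)
    · obtain ⟨i, j, hij, hi, hj⟩ := hXH.2.1 b b' (hH b b' hadj)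
      exact ⟨Fin.natAdd rG i, Fin.natAdd rG j, Fin.le_def.2 (by simpa using Fin.le_def.1 hij),
        by simpa using hi, by simpa using hj⟩
  · rintro (a | b) i j k hij hjk hi hk <;>
      induction i using Fin.addCases <;> induction j using Fin.addCases <;>
      induction k using Fin.addCases <;> simp only [Fin.le_def, Fin.val_castAdd, Fin.val_natAdd,
        Fin.append_left, Fin.append_right, Set.mem_image, Sum.inl.injEq, Sum.inr.injEq,
        reduceCtorEq, exists_eq_right, and_false, exists_false] at * <;> first
      | omega
      | exact hXG.2.2 a _ _ _ (Fin.le_def.2 hij) (Fin.le_def.2 hjk) hi hk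
      | exact hXH.2.2 b _ _ _ (Fin.le_def.2 (by omega)) (Fin.le_def.2 (by omega)) hi hk

lemma IsDPD.image_union_compl_range {U : Type} {K : Digraph' U} {G : Digraph' V} {φ : V → U}
    (hφ : φ.Injective) (hadj : ∀ a b, K.Adj (φ a) (φ b) → G.Adj a b)
    {r : ℕ} {X : Fin r → Set V} (hX : IsDPD G r X) (i₀ : Fin r) :
    IsDPD K r fun i => φ '' X i ∪ (Set.range φ)ᶜ := by
  have mem_image : ∀ a i, φ a ∈ φ '' X i ∪ (Set.range φ)ᶜ ↔ a ∈ X i := by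
    simp [hφ.mem_set_image]
  have mem_compl : ∀ u ∉ Set.range φ, ∀ i, u ∈ φ '' X i ∪ (Set.range φ)ᶜ :=
    fun u hu _ => .inr hu
  refine ⟨fun u => ?_, fun u v huv => ?_, fun u i j k hij hjk hi hk => ?_⟩
  · by_cases hu : u ∈ Set.range φ
    · obtain ⟨a, rfl⟩ := hu
      obtain ⟨i, hi⟩ := hX.1 a
      exact ⟨i, (mem_image a i).2 hi⟩
    · exact ⟨i₀, mem_compl u hu i₀⟩
  · by_cases hu : u ∈ Set.range φ <;> by_cases hv : v ∈ Set.range φ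
    · obtain ⟨a, rfl⟩ := hu
      obtain ⟨b, rfl⟩ := hv
      obtain ⟨i, j, hij, hi, hj⟩ := hX.2.1 a b (hadj a b huv)
      exact ⟨i, j, hij, (mem_image a i).2 hi, (mem_image b j).2 hj⟩
    · obtain ⟨a, rfl⟩ := hu
      obtain ⟨i, hi⟩ := hX.1 a
      exact ⟨i, i, le_rfl, (mem_image a i).2 hi, mem_compl v hv i⟩
    · obtain ⟨b, rfl⟩ := hv
      obtain ⟨i, hi⟩ := hX.1 b
      exact ⟨i, i, le_rfl, mem_compl u hu i, (mem_image b i).2 hi⟩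
    · exact ⟨i₀, i₀, le_rfl, mem_compl u hu i₀, mem_compl v hv i₀⟩
  · by_cases hu : u ∈ Set.range φ
    · obtain ⟨a, rfl⟩ := hu
      rw [mem_image] at hi hk ⊢
      exact hX.2.2 a i j k hij hjk hi hk
    · exact mem_compl u hu j

variable [Fintype V] [Fintype W]

lemma dpw_le_of_isDPD {G : Digraph' V} {r : ℕ} {bags : Fin r → Set V} (h : IsDPD G r bags) :
    dpw G ≤ bagsWidth bags :=
  Nat.sInf_le ⟨r, bags, h, rfl⟩

lemma exists_isDPD_bagsWidth_eq_dpw (G : Digraph' V) :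
    ∃ (r : ℕ) (bags : Fin r → Set V), IsDPD G r bags ∧ bagsWidth bags = dpw G :=
  Nat.sInf_mem
    (s := {w | ∃ (r : ℕ) (bags : Fin r → Set V), IsDPD G r bags ∧ bagsWidth bags = w})
    ⟨_, 1, _, isDPD_const_univ G, rfl⟩

lemma dpw_le_card_sub_one (G : Digraph' V) : dpw G ≤ Nat.card V - 1 := by
  refine (dpw_le_of_isDPD (isDPD_const_univ G)).trans ?_
  simp [bagsWidth, Set.ncard_univ]

lemma dpw_le_max_of_forall_not_adj_inr_inl {K : Digraph' (V ⊕ W)} {G : Digraph' V}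
    {H : Digraph' W} (hG : ∀ a b, K.Adj (.inl a) (.inl b) → G.Adj a b)
    (hH : ∀ a b, K.Adj (.inr a) (.inr b) → H.Adj a b)
    (hback : ∀ a b, ¬ K.Adj (.inr b) (.inl a)) :
    dpw K ≤ max (dpw G) (dpw H) := by
  obtain ⟨rG, XG, hXG, hwG⟩ := exists_isDPD_bagsWidth_eq_dpw G
  obtain ⟨rH, XH, hXH, hwH⟩ := exists_isDPD_bagsWidth_eq_dpw H
  refine (dpw_le_of_isDPD (hXG.append hG hH hback hXH)).trans
    ((bagsWidth_le_iff _ _).2 fun i => ?_)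
  induction i using Fin.addCases with
  | left i =>
    rw [Fin.append_left, Set.ncard_image_of_injective _ Sum.inl_injective]
    have := ncard_le_bagsWidth_add_one XG i
    omega
  | right j =>
    rw [Fin.append_right, Set.ncard_image_of_injective _ Sum.inr_injective]
    have := ncard_le_bagsWidth_add_one XH j
    omega

lemma dpw_dDisjUnion_le (G : Digraph' V) (H : Digraph' W) :
    dpw (dDisjUnion G H) ≤ max (dpw G) (dpw H) :=
  dpw_le_max_of_forall_not_adj_inr_inl (fun _ _ => id) (fun _ _ => id) (fun _ _ => id)

lemma dpw_dOrder_le (G : Digraph' V) (H : Digraph' W) :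
    dpw (dOrder G H) ≤ max (dpw G) (dpw H) :=
  dpw_le_max_of_forall_not_adj_inr_inl (fun _ _ => id) (fun _ _ => id) (fun _ _ => id)

lemma dpw_le_dpw_add_ncard_compl_range {U : Type} [Fintype U] [Nonempty V] {K : Digraph' U}
    {G : Digraph' V} {φ : V → U} (hφ : φ.Injective)
    (hadj : ∀ a b, K.Adj (φ a) (φ b) → G.Adj a b) :
    dpw K ≤ dpw G + (Set.range φ)ᶜ.ncard := by
  obtain ⟨r, X, hX, hw⟩ := exists_isDPD_bagsWidth_eq_dpw G
  obtain ⟨i₀, -⟩ := hX.1 (Classical.arbitrary V)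
  refine (dpw_le_of_isDPD (hX.image_union_compl_range hφ hadj i₀)).trans
    ((bagsWidth_le_iff _ _).2 fun i => ?_)
  calc (φ '' X i ∪ (Set.range φ)ᶜ).ncard
      ≤ (φ '' X i).ncard + (Set.range φ)ᶜ.ncard := Set.ncard_union_le _ _
    _ ≤ dpw G + (Set.range φ)ᶜ.ncard + 1 := by
      rw [Set.ncard_image_of_injective _ hφ, ← hw]
      have := ncard_le_bagsWidth_add_one X i
      omega

lemma dpw_dSeries_le_left [Nonempty V] (G : Digraph' V) (H : Digraph' W) :
    dpw (dSeries G H) ≤ dpw G + Nat.card W := by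
  simpa [Set.compl_range_inl, Set.ncard_range_of_injective Sum.inr_injective] using
    dpw_le_dpw_add_ncard_compl_range (K := dSeries G H) Sum.inl_injective fun _ _ => id

lemma dpw_dSeries_le_right [Nonempty W] (G : Digraph' V) (H : Digraph' W) :
    dpw (dSeries G H) ≤ dpw H + Nat.card V := by
  simpa [Set.compl_range_inr, Set.ncard_range_of_injective Sum.inl_injective] using
    dpw_le_dpw_add_ncard_compl_range (K := dSeries G H) Sum.inr_injective fun _ _ => id

end PathWidth

section Haven

variable {V U W : Type}

def StronglyConnectedOn (G : Digraph' V) (C : Set V) : Prop :=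
  ∀ u v : C, Reach (G.induce C) u v

/-- `C` is a nonempty strongly connected set of `G - Z`. The havens below pick flaps, where
Johnson, Robertson, Seymour and Thomas pick strong components of `G - Z`. -/
def IsFlap (G : Digraph' V) (Z C : Set V) : Prop :=
  C.Nonempty ∧ Disjoint C Z ∧ StronglyConnectedOn G C

structure IsHaven (G : Digraph' V) (k : ℕ) (β : Set V → Set V) : Prop where
  isFlap : ∀ Z : Set V, Z.ncard < k → IsFlap G Z (β Z)
  antitone : ∀ Z Z' : Set V, Z ⊆ Z' → Z'.ncard < k → β Z' ⊆ β Z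

def HasHaven (G : Digraph' V) (k : ℕ) : Prop :=
  ∃ β, IsHaven G k β

lemma isFlap_singleton (G : Digraph' V) {Z : Set V} {v : V} (hv : v ∉ Z) : IsFlap G Z {v} := by
  refine ⟨Set.singleton_nonempty v, Set.disjoint_singleton_left.2 hv, ?_⟩
  rintro ⟨a, rfl⟩ ⟨b, rfl⟩
  exact .refl

lemma IsFlap.image {G : Digraph' V} {K : Digraph' U} {φ : V → U}
    (hadj : ∀ a b, G.Adj a b → K.Adj (φ a) (φ b)) {Z : Set U} {C : Set V}
    (hC : IsFlap G (φ ⁻¹' Z) C) : IsFlap K Z (φ '' C) := by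
  obtain ⟨hne, hdisj, hconn⟩ := hC
  refine ⟨hne.image φ, Set.disjoint_image_left.2 hdisj, ?_⟩
  rintro ⟨_, a, ha, rfl⟩ ⟨_, b, hb, rfl⟩
  exact (hconn ⟨a, ha⟩ ⟨b, hb⟩).lift (p := (K.induce (φ '' C)).Adj)
    (fun x : C => ⟨φ x, Set.mem_image_of_mem φ x.2⟩) fun _ _ h => hadj _ _ h

lemma HasHaven.mono {G : Digraph' V} {k k' : ℕ} (h : HasHaven G k) (hk : k' ≤ k) :
    HasHaven G k' := by
  obtain ⟨β, hβ⟩ := h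
  exact ⟨β, fun Z hZ => hβ.isFlap Z (hZ.trans_le hk),
    fun Z Z' hZZ' hZ' => hβ.antitone Z Z' hZZ' (hZ'.trans_le hk)⟩

lemma hasHaven_one [Finite V] [Nonempty V] (G : Digraph' V) : HasHaven G 1 := by
  refine ⟨fun _ => {Classical.arbitrary V}, fun Z hZ => isFlap_singleton G ?_,
    fun _ _ _ _ => subset_rfl⟩
  rw [Nat.lt_one_iff, Set.ncard_eq_zero] at hZ
  simp [hZ]

lemma HasHaven.map [Finite U] {G : Digraph' V} {K : Digraph' U} {φ : V → U} (hφ : φ.Injective)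
    (hadj : ∀ a b, G.Adj a b → K.Adj (φ a) (φ b)) {k : ℕ} (h : HasHaven G k) :
    HasHaven K k := by
  obtain ⟨β, hβ⟩ := h
  have hcard : ∀ Z : Set U, (φ ⁻¹' Z).ncard ≤ Z.ncard := fun Z => by
    rw [← Set.ncard_image_of_injective _ hφ]
    exact Set.ncard_le_ncard (Set.image_preimage_subset φ Z)
  exact ⟨fun Z => φ '' β (φ ⁻¹' Z),
    fun Z hZ => (hβ.isFlap _ ((hcard Z).trans_lt hZ)).image hadj,
    fun Z Z' hZZ' hZ' => Set.image_mono
      (hβ.antitone _ _ (Set.preimage_mono hZZ') ((hcard Z').trans_lt hZ'))⟩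

lemma isFlap_compl_dSeries (G : Digraph' V) (H : Digraph' W) {Z : Set (V ⊕ W)}
    (hl : ¬ Set.range Sum.inl ⊆ Z) (hr : ¬ Set.range Sum.inr ⊆ Z) :
    IsFlap (dSeries G H) Z Zᶜ := by
  obtain ⟨_, ⟨a₀, rfl⟩, ha₀⟩ := Set.not_subset.1 hl
  obtain ⟨_, ⟨b₀, rfl⟩, hb₀⟩ := Set.not_subset.1 hr
  refine ⟨⟨_, ha₀⟩, disjoint_compl_left, ?_⟩
  have arc : ∀ x y : (Zᶜ : Set (V ⊕ W)), x.1.isLeft ≠ y.1.isLeft →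
      Reach ((dSeries G H).induce Zᶜ) x y := by
    rintro ⟨x | x, hx⟩ ⟨y | y, hy⟩ h <;> first | exact absurd rfl h | exact .single trivial
  intro x y
  rcases x with ⟨x | x, hx⟩ <;> rcases y with ⟨y | y, hy⟩
  · exact (arc _ ⟨_, hb₀⟩ (by simp)).trans (arc _ _ (by simp))
  · exact arc _ _ (by simp)
  · exact arc _ _ (by simp)
  · exact (arc _ ⟨_, ha₀⟩ (by simp)).trans (arc _ _ (by simp))

lemma hasHaven_dSeries [Finite V] [Finite W] {G : Digraph' V} {H : Digraph' W} {kG kH : ℕ}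
    (hkH : kH ≤ Nat.card W) (hG : HasHaven G kG) (hH : HasHaven H kH) :
    HasHaven (dSeries G H) (min (kG + Nat.card W) (kH + Nat.card V)) := by
  obtain ⟨βG, hβG⟩ := hG
  obtain ⟨βH, hβH⟩ := hH
  set k := min (kG + Nat.card W) (kH + Nat.card V)
  have card_inr : ∀ Z : Set (V ⊕ W), Set.range Sum.inl ⊆ Z → Z.ncard < k →
      (Sum.inr ⁻¹' Z).ncard < kH := fun Z hZ hk => by
    have hV : Sum.inl ⁻¹' Z = Set.univ := Set.eq_univ_of_forall fun a => hZ ⟨a, rfl⟩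
    have := Set.ncard_eq_ncard_preimage_inl_add_ncard_preimage_inr Z
    rw [hV, Set.ncard_univ] at this
    omega
  have card_inl : ∀ Z : Set (V ⊕ W), Set.range Sum.inr ⊆ Z → Z.ncard < k →
      (Sum.inl ⁻¹' Z).ncard < kG := fun Z hZ hk => by
    have hW : Sum.inr ⁻¹' Z = Set.univ := Set.eq_univ_of_forall fun b => hZ ⟨b, rfl⟩
    have := Set.ncard_eq_ncard_preimage_inl_add_ncard_preimage_inr Z
    rw [hW, Set.ncard_univ] at this
    omega
  have not_both : ∀ Z : Set (V ⊕ W), Z.ncard < k → Set.range Sum.inl ⊆ Z →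
      ¬ Set.range Sum.inr ⊆ Z := fun Z hk hl hr => by
    have := card_inr Z hl hk
    have hW : Sum.inr ⁻¹' Z = Set.univ := Set.eq_univ_of_forall fun b => hr ⟨b, rfl⟩
    rw [hW, Set.ncard_univ] at this
    omega
  -- Once `Z` swallows one side, the haven of the other side takes over; otherwise all of
  -- `G - Z` is strongly connected through the arcs between the two sides.
  let β : Set (V ⊕ W) → Set (V ⊕ W) := fun Z =>
    if Set.range Sum.inl ⊆ Z then Sum.inr '' βH (Sum.inr ⁻¹' Z)
    else if Set.range Sum.inr ⊆ Z then Sum.inl '' βG (Sum.inl ⁻¹' Z)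
    else Zᶜ
  have isFlap : ∀ Z : Set (V ⊕ W), Z.ncard < k → IsFlap (dSeries G H) Z (β Z) := by
    intro Z hk
    simp only [β]
    split_ifs with hl hr
    · exact (hβH.isFlap _ (card_inr Z hl hk)).image (φ := Sum.inr) fun _ _ => id
    · exact (hβG.isFlap _ (card_inl Z hr hk)).image (φ := Sum.inl) fun _ _ => id
    · exact isFlap_compl_dSeries G H hl hr
  refine ⟨β, ⟨isFlap, fun Z Z' hZZ' hk' => ?_⟩⟩
  by_cases hl : Set.range Sum.inl ⊆ Z
  · simp only [β, if_pos hl, if_pos (hl.trans hZZ')]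
    exact Set.image_mono
      (hβH.antitone _ _ (Set.preimage_mono hZZ') (card_inr Z' (hl.trans hZZ') hk'))
  by_cases hr : Set.range Sum.inr ⊆ Z
  · have hr' := hr.trans hZZ'
    have hl' : ¬ Set.range Sum.inl ⊆ Z' := fun hl' => not_both Z' hk' hl' hr'
    simp only [β, if_neg hl, if_neg hl', if_pos hr, if_pos hr']
    exact Set.image_mono (hβG.antitone _ _ (Set.preimage_mono hZZ') (card_inl Z' hr' hk'))
  · have hZ : β Z = Zᶜ := by simp only [β, if_neg hl, if_neg hr]
    rw [hZ]
    exact (isFlap Z' hk').2.1.subset_compl_right.trans (Set.compl_subset_compl.2 hZZ')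

end Haven

namespace DTD

variable {V : Type} {G : Digraph' V} (D : DTD G)

def subtree (s : Fin D.t) : Set V :=
  ⋃ r ∈ {r : Fin D.t | ∃ n : ℕ, D.par^[n] r = s}, D.W r

lemma subtree_root : D.subtree D.root = Set.univ :=
  Set.eq_univ_of_forall fun v => by
    obtain ⟨s, hs⟩ := D.W_cover v
    exact Set.mem_biUnion (D.reach s) hs

lemma W_subset_subtree (s : Fin D.t) : D.W s ⊆ D.subtree s :=
  fun _ hv => Set.mem_biUnion ⟨0, rfl⟩ hv

lemma subtree_subset_of_par_eq {s c : Fin D.t} (hc : D.par c = s) :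
    D.subtree c ⊆ D.subtree s := by
  simp only [subtree, Set.iUnion₂_subset_iff]
  rintro r ⟨n, rfl⟩
  exact Set.subset_biUnion_of_mem (u := D.W) ⟨n + 1, by rw [Function.iterate_succ_apply', hc]⟩

lemma eq_root_of_isPeriodicPt {s : Fin D.t} {j : ℕ} (hj : 0 < j)
    (hs : Function.IsPeriodicPt D.par j s) : s = D.root := by
  obtain ⟨N, hN⟩ := D.reach s
  have hmod : D.par^[N % j] s = D.root := (hs.iterate_mod_apply N).trans hN
  calc s = D.par^[(j - N % j) + N % j] s := by
        rw [Nat.sub_add_cancel (Nat.mod_lt N hj).le]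
        exact hs.eq.symm
    _ = D.root := by rw [Function.iterate_add_apply, hmod, Function.iterate_fixed D.par_root]

lemma subtree_ssubset_of_par_eq {s c : Fin D.t} (hc : D.par c = s) (hc' : c ≠ D.root) :
    D.subtree c ⊂ D.subtree s := by
  refine (D.subtree_subset_of_par_eq hc).ssubset_of_not_subset fun hsub => ?_
  obtain ⟨w, hw⟩ := D.W_nonempty s
  obtain ⟨r, ⟨n, hn⟩, hr⟩ := Set.mem_iUnion₂.1 (hsub (D.W_subset_subtree s hw))
  obtain rfl : r = s := by_contra fun hrs => Set.disjoint_left.1 (D.W_disjoint _ _ hrs) hr hw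
  -- `c` would lie on a cycle through `s`, and only the root lies on a cycle
  refine hc' (D.eq_root_of_isPeriodicPt (j := n + 1) n.succ_pos ?_)
  rw [Function.IsPeriodicPt, Function.IsFixedPt, Function.iterate_succ_apply, hc, hn]

lemma mem_subtree {s : Fin D.t} {v : V} (hv : v ∈ D.subtree s) :
    v ∈ D.W s ∨ ∃ c, c ≠ D.root ∧ D.par c = s ∧ v ∈ D.subtree c := by
  obtain ⟨r, ⟨n, hn⟩, hr⟩ := Set.mem_iUnion₂.1 hv
  induction n generalizing s with
  | zero => exact .inl (hn ▸ hr)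
  | succ n ih =>
    rw [Function.iterate_succ_apply'] at hn
    by_cases hroot : D.par^[n] r = D.root
    · rw [hroot, D.par_root] at hn
      exact ih (hn ▸ hv) (hroot.trans hn)
    · exact .inr ⟨_, hroot, hn, Set.mem_biUnion ⟨n, rfl⟩ hr⟩

lemma W_subset_bagAt (s : Fin D.t) : D.W s ⊆ D.bagAt s :=
  Set.subset_union_left

lemma X_subset_bagAt {s c : Fin D.t} (hc : c ≠ D.root) (hcs : c = s ∨ D.par c = s) :
    D.X c ⊆ D.bagAt s :=
  fun _ hx => .inr (Set.mem_biUnion ⟨hc, hcs⟩ hx)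

end DTD

lemma zNormal_of_forall_adj {V : Type} {G : Digraph' V} {Z S : Set V}
    (hS : ∀ a b, a ∈ S → G.Adj a b → b ∉ Z → b ∈ S) : ZNormal G Z S := by
  intro l _ hchain hZ hhead _
  refine (hchain.imp_of_mem_imp (S := fun a b => G.Adj a b ∧ b ∉ Z)
    fun a b _ hb hab => ⟨hab, hZ b hb⟩).induction (· ∈ S) l
    (fun a b hab ha => hS a b ha hab.1 hab.2) fun _ => hhead

lemma ZNormal.subset_of_isFlap {V : Type} {G : Digraph' V} {Z S C : Set V} (hS : ZNormal G Z S)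
    (hC : IsFlap G Z C) (hCS : (C ∩ S).Nonempty) : C ⊆ S := by
  obtain ⟨u, huC, huS⟩ := hCS
  intro w hw
  obtain ⟨l, hl, hchain, hhead, hlast, hwl⟩ :=
    List.exists_isChain_through (hC.2.2 ⟨u, huC⟩ ⟨w, hw⟩) (hC.2.2 ⟨w, hw⟩ ⟨u, huC⟩)
  refine hS (l.map Subtype.val) (fun h => hl (List.map_eq_nil_iff.1 h))
    (List.isChain_map_of_isChain Subtype.val (fun _ _ h => h) hchain) ?_ ?_ ?_ w
    (List.mem_map_of_mem hwl)
  · simp only [List.mem_map]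
    rintro _ ⟨x, -, rfl⟩
    exact Set.disjoint_left.1 hC.2.1 x.2
  · rwa [List.head_map, hhead]
  · rwa [List.getLast_map, hlast]

lemma IsHaven.exists_le_ncard_bagAt {V : Type} [Finite V] {G : Digraph' V} {k : ℕ}
    {β : Set V → Set V} (hβ : IsHaven G k β) (D : DTD G) : ∃ s, k ≤ (D.bagAt s).ncard := by
  by_contra! hsmall
  have descend : ∀ s, β (D.bagAt s) ⊆ D.subtree s →
      ∃ c, D.subtree c ⊂ D.subtree s ∧ β (D.bagAt c) ⊆ D.subtree c := by
    intro s hs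
    obtain ⟨u, hu⟩ := (hβ.isFlap _ (hsmall s)).1
    rcases D.mem_subtree (hs hu) with huW | ⟨c, hc, hcs, huc⟩
    · exact absurd (D.W_subset_bagAt s huW) (Set.disjoint_left.1 (hβ.isFlap _ (hsmall s)).2.1 hu)
    refine ⟨c, D.subtree_ssubset_of_par_eq hcs hc, ?_⟩
    have hXc : D.X c ⊆ D.bagAt c := D.X_subset_bagAt hc (.inl rfl)
    have hXs : D.X c ⊆ D.bagAt s := D.X_subset_bagAt hc (.inr hcs)
    have hXk : (D.X c).ncard < k := (Set.ncard_le_ncard hXc).trans_lt (hsmall c)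
    have hnormal : ZNormal G (D.X c) (D.subtree c) := D.normal c hc
    refine (hβ.antitone _ _ hXc (hsmall c)).trans (hnormal.subset_of_isFlap (hβ.isFlap _ hXk) ?_)
    exact ⟨u, hβ.antitone _ _ hXs (hsmall s) hu, huc⟩
  suffices ∀ s, ¬ β (D.bagAt s) ⊆ D.subtree s from
    this D.root (D.subtree_root ▸ Set.subset_univ _)
  intro s
  induction s using (measure fun s => (D.subtree s).ncard).wf.induction with
  | _ s ih =>
    intro hs
    obtain ⟨c, hcs, hc⟩ := descend s hs
    exact ih c (Set.ncard_lt_ncard hcs) hc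

lemma HasHaven.le_width {V : Type} [Finite V] {G : Digraph' V} {k : ℕ}
    (h : HasHaven G (k + 1)) (D : DTD G) : k ≤ D.width := by
  obtain ⟨β, hβ⟩ := h
  obtain ⟨s, hs⟩ := hβ.exists_le_ncard_bagAt D
  have := (Finset.univ_sup_sub_one_le_iff (fun s => (D.bagAt s).ncard) D.width).1 le_rfl s
  omega

section TreeWidth

variable {V : Type} [Fintype V] {G : Digraph' V}

lemma dtw_le_width (D : DTD G) : dtw G ≤ D.width :=
  Nat.sInf_le ⟨D, rfl⟩

lemma exists_width_eq_dtw (D : DTD G) : ∃ D' : DTD G, D'.width = dtw G :=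
  Nat.sInf_mem (s := {w | ∃ D : DTD G, D.width = w}) ⟨_, D, rfl⟩

end TreeWidth

section PathDecomposition

variable {V : Type} {G : Digraph' V} {n : ℕ}

def pathParent (n : ℕ) (k : Fin n) : Fin n :=
  ⟨k - 1, by omega⟩

lemma val_pathParent_iterate (m : ℕ) (k : Fin n) : ((pathParent n)^[m] k : ℕ) = k - m := by
  induction m generalizing k with
  | zero => rfl
  | succ m ih =>
    rw [Function.iterate_succ_apply, ih]
    show (k : ℕ) - 1 - m = k - (m + 1)
    omega

lemma exists_pathParent_iterate_eq_iff (r k : Fin n) :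
    (∃ m, (pathParent n)^[m] r = k) ↔ k ≤ r := by
  refine ⟨fun ⟨m, hm⟩ => ?_, fun hkr => ⟨r - k, Fin.ext ?_⟩⟩
  · rw [Fin.le_def, ← hm, val_pathParent_iterate]
    omega
  · rw [val_pathParent_iterate]
    exact Nat.sub_sub_self hkr

/-- The tree is the path `0 → 1 → ⋯ → n - 1` and the parts are `W k = {e k}`, so the subtree
below `k` carries the vertices `e k, …, e (n - 1)`. -/
def pathDTD (hn : 0 < n) (e : Fin n ≃ V) (X : Fin n → Set V)
    (hX : ∀ k, ZNormal G (X k) {v | k ≤ e.symm v}) : DTD G where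
  t := n
  root := ⟨0, hn⟩
  par := pathParent n
  par_root := rfl
  reach k := ⟨k, Fin.ext (by rw [val_pathParent_iterate, Nat.sub_self])⟩
  W k := {e k}
  X := X
  W_nonempty _ := Set.singleton_nonempty _
  W_disjoint _ _ h := Set.disjoint_singleton.2 (e.injective.ne h)
  W_cover v := ⟨e.symm v, by simp⟩
  normal k _ := by
    convert hX k using 1
    ext v
    simp [exists_pathParent_iterate_eq_iff, ← e.symm_apply_eq]

lemma mem_bagAt_pathDTD {hn : 0 < n} {e : Fin n ≃ V} {X : Fin n → Set V}
    {hX : ∀ k, ZNormal G (X k) {v | k ≤ e.symm v}} {k : Fin n} {x : V}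
    (hx : x ∈ (pathDTD hn e X hX).bagAt k) :
    x = e k ∨ ∃ c : Fin n, ((c : ℕ) = k ∨ (c : ℕ) = k + 1) ∧ x ∈ X c := by
  rcases hx with hx | hx
  · exact .inl hx
  · obtain ⟨c, ⟨hc, hck⟩, hxc⟩ := Set.mem_iUnion₂.1 hx
    refine .inr ⟨c, ?_, hxc⟩
    have hc : (c : ℕ) ≠ 0 := fun h => hc (Fin.ext h)
    rcases hck with rfl | hck
    · exact .inl rfl
    · have := congrArg Fin.val hck
      simp only [pathDTD, pathParent] at this
      omega

end PathDecomposition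

lemma exists_dtd_width_le_dpw {V : Type} [Fintype V] [Nonempty V] (G : Digraph' V) :
    ∃ D : DTD G, D.width ≤ dpw G := by
  obtain ⟨r, X, hX, hw⟩ := exists_isDPD_bagsWidth_eq_dpw G
  have first : ∀ v, ∃ i, v ∈ X i ∧ ∀ j, v ∈ X j → i ≤ j := fun v => by
    obtain ⟨i, hi, hmin⟩ := wellFounded_lt.has_min {i | v ∈ X i} (hX.1 v)
    exact ⟨i, hi, fun j hj => not_lt.1 (hmin j hj)⟩
  choose f hf hf_min using first
  have interval : ∀ b i j, f b ≤ i → i ≤ j → b ∈ X j → b ∈ X i :=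
    fun b i j hbi hij hj => hX.2.2 b (f b) i j hbi hij (hf b) hj
  obtain ⟨e, he⟩ := Fintype.exists_equiv_fin_monotone_comp f
  have f_le : ∀ {v k}, e.symm v ≤ k → f v ≤ f (e k) := fun h => by simpa using he h
  have le_f : ∀ {k v}, k ≤ e.symm v → f (e k) ≤ f v := fun h => by simpa using he h
  let Y : Fin (Fintype.card V) → Set V := fun k => {b ∈ X (f (e k)) | e.symm b < k}
  have hY : ∀ k, ZNormal G (Y k) {v | k ≤ e.symm v} := fun k =>
    zNormal_of_forall_adj fun a b (ha : k ≤ e.symm a) hab hb => by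
      by_contra hbk
      obtain ⟨i, j, hij, hi, hj⟩ := hX.2.1 a b hab
      exact hb ⟨interval b _ j (f_le (not_le.1 hbk).le)
        ((le_f ha).trans ((hf_min a i hi).trans hij)) hj, not_le.1 hbk⟩
  refine ⟨pathDTD Fintype.card_pos e Y hY, (Finset.univ_sup_sub_one_le_iff _ _).2 fun k => ?_⟩
  rw [← hw]
  refine (Set.ncard_le_ncard fun x hx => ?_).trans (ncard_le_bagsWidth_add_one X (f (e k)))
  rcases mem_bagAt_pathDTD hx with rfl | ⟨c, hc | hc, hxc⟩
  · exact hf _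
  · obtain rfl : c = k := Fin.ext hc
    exact hxc.1
  · have hxk : e.symm x ≤ k := by have := hxc.2; omega
    exact interval x _ _ (f_le hxk) (le_f (by rw [e.symm_apply_apply]; omega)) hxc.1

lemma DiCograph.nonempty {V : Type} {G : Digraph' V} (h : DiCograph G) : Nonempty V := by
  induction h with
  | single _ hne _ => exact hne
  | disjUnion _ _ ih _ | series _ _ ih _ | order _ _ ih _ => exact ⟨.inl ih.some⟩

lemma hasHaven_of_dpw_le_max {V W : Type} [Fintype V] [Fintype W] {K : Digraph' (V ⊕ W)}
    {G : Digraph' V} {H : Digraph' W} (hG : ∀ a b, G.Adj a b → K.Adj (.inl a) (.inl b))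
    (hH : ∀ a b, H.Adj a b → K.Adj (.inr a) (.inr b)) (hK : dpw K ≤ max (dpw G) (dpw H))
    (hvG : HasHaven G (dpw G + 1)) (hvH : HasHaven H (dpw H + 1)) : HasHaven K (dpw K + 1) := by
  rcases le_total (dpw G) (dpw H) with hle | hle
  · exact (hvH.map Sum.inr_injective hH).mono (by omega)
  · exact (hvG.map Sum.inl_injective hG).mono (by omega)

lemma DiCograph.hasHaven {V : Type} {G : Digraph' V} (h : DiCograph G) :
    ∀ [Fintype V], HasHaven G (dpw G + 1) := by
  induction h with
  | single G _ _ =>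
    intro _
    have := dpw_le_card_sub_one G
    have := Finite.card_le_one_iff_subsingleton.2 ‹Subsingleton _›
    exact (hasHaven_one G).mono (by omega)
  | @disjUnion V W G H _ _ ihG ihH =>
    intro _
    have := Fintype.sumLeft (α := V) (β := W)
    have := Fintype.sumRight (α := V) (β := W)
    exact hasHaven_of_dpw_le_max (fun _ _ => id) (fun _ _ => id) (dpw_dDisjUnion_le G H) ihG ihH
  | @order V W G H _ _ ihG ihH =>
    intro _
    have := Fintype.sumLeft (α := V) (β := W)
    have := Fintype.sumRight (α := V) (β := W)
    exact hasHaven_of_dpw_le_max (fun _ _ => id) (fun _ _ => id) (dpw_dOrder_le G H) ihG ihH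
  | @series V W G H hG hH ihG ihH =>
    intro _
    have := Fintype.sumLeft (α := V) (β := W)
    have := Fintype.sumRight (α := V) (β := W)
    have := hG.nonempty
    have := hH.nonempty
    -- `dpw` ignores its `Fintype` argument, so these bounds, proved for the sum instance, hold
    -- for the instance on `V ⊕ W` at hand.
    have hKG : dpw (dSeries G H) ≤ dpw G + Nat.card W := dpw_dSeries_le_left G H
    have hKH : dpw (dSeries G H) ≤ dpw H + Nat.card V := dpw_dSeries_le_right G H
    have hH_card : dpw H + 1 ≤ Nat.card W := by
      have := dpw_le_card_sub_one H
      have := Nat.card_pos (α := W)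
      omega
    exact (hasHaven_dSeries hH_card ihG ihH).mono (by omega)

theorem stmt16 {V : Type} [Fintype V] (G : Digraph' V) (h : DiCograph G) :
    dpw G = dtw G := by
  have := h.nonempty
  obtain ⟨D, hD⟩ := exists_dtd_width_le_dpw G
  obtain ⟨D', hD'⟩ := exists_width_eq_dtw D
  exact le_antisymm (hD' ▸ h.hasHaven.le_width D') ((dtw_le_width D).trans hD)
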